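/- Let d ≥ 2, m ∈ ℝ, and let F : (0,∞) × (ℝ^{d-1} \ {0}) → ℂ be smooth and homogeneous of generalized degree −m. Fix a multi-index α' ∈ ℕ^{d-1} and an integer α_d ≥ 0 with m + |α'| + α_d ≥ 0, and suppose C := sup { | y_d^{α_d} (∂_{ξ'}^{α'} F)(y_d, ω) | : y_d > 0, |ω| = 1 } is finite. Then there is a constant C' > 0 such that for all y_d > 0 and all ξ' with |ξ'| ≥ 1, | ∂_{ξ'}^{α'} ( y_d^{α_d} F(y_d, ξ') ) | ≤ C' (1 + |ξ'|)^{ −m − |α'| − α_d }. -/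

import Mathlib

/-- A function `F(y_d, ξ')` on `(0,∞) × (ℝ^(d-1) \ {0})` is homogeneous of generalized
degree `s` if `F(t⁻¹ y_d, t ξ') = t^s F(y_d, ξ')` for all `t > 0`, `y_d > 0`, `ξ' ≠ 0`. -/
def GenHomogeneousE {n : ℕ} (s : ℝ) (F : ℝ → EuclideanSpace ℝ (Fin n) → ℂ) : Prop :=
  ∀ t : ℝ, 0 < t → ∀ y : ℝ, 0 < y → ∀ ξ : EuclideanSpace ℝ (Fin n), ξ ≠ 0 →
    F (t⁻¹ * y) (t • ξ) = ((t ^ s : ℝ) : ℂ) * F y ξ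

/-- Partial derivative in the `ξ_j`-variable. -/
noncomputable def pderivXi {n : ℕ} (j : Fin n) (F : ℝ → EuclideanSpace ℝ (Fin n) → ℂ) :
    ℝ → EuclideanSpace ℝ (Fin n) → ℂ :=
  fun y ξ => fderiv ℝ (fun ζ => F y ζ) ξ (EuclideanSpace.single j (1 : ℝ))

/-- Iterated partial derivatives `∂_{ξ'}^{α'}` in the `ξ'`-variables, the multi-index `α'`
being recorded as a list of coordinate directions (with `|α'|` its length). -/
noncomputable def pderivXiList {n : ℕ} : List (Fin n) → (ℝ → EuclideanSpace ℝ (Fin n) → ℂ) →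
    ℝ → EuclideanSpace ℝ (Fin n) → ℂ
  | [], F => F
  | j :: L, F => pderivXi j (pderivXiList L F)

open Filter Topology

lemma pderivXi_genHom {n : ℕ} (s : ℝ) (G : ℝ → EuclideanSpace ℝ (Fin n) → ℂ)
    (hG : GenHomogeneousE s G)
    (hdiff : ∀ y : ℝ, 0 < y → ∀ ξ : EuclideanSpace ℝ (Fin n), ξ ≠ 0 →
      DifferentiableAt ℝ (G y) ξ) (j : Fin n) :
    GenHomogeneousE (s - 1) (pderivXi j G) := by
  intro t ht y hy ξ hξ
  have hdf : DifferentiableAt ℝ (G (t⁻¹ * y)) (t • ξ) :=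
    hdiff _ (by positivity) _ (smul_ne_zero (ne_of_gt ht) hξ)
  have hdg : DifferentiableAt ℝ (G y) ξ := hdiff y hy ξ hξ
  have hAd : DifferentiableAt ℝ (fun ζ : EuclideanSpace ℝ (Fin n) => t • ζ) ξ :=
    (differentiable_id.const_smul t).differentiableAt
  have hAf : fderiv ℝ (fun ζ : EuclideanSpace ℝ (Fin n) => t • ζ) ξ
      = t • ContinuousLinearMap.id ℝ (EuclideanSpace ℝ (Fin n)) := by
    have : (fun ζ : EuclideanSpace ℝ (Fin n) => t • ζ)
        = fun ζ => (t • ContinuousLinearMap.id ℝ (EuclideanSpace ℝ (Fin n))) ζ := rfl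
    rw [this, ContinuousLinearMap.fderiv]
  have hcomp : fderiv ℝ (fun ζ : EuclideanSpace ℝ (Fin n) => G (t⁻¹ * y) (t • ζ)) ξ
      = (fderiv ℝ (G (t⁻¹ * y)) (t • ξ)).comp
        (t • ContinuousLinearMap.id ℝ (EuclideanSpace ℝ (Fin n))) := by
    have h := fderiv_comp (g := G (t⁻¹ * y))
      (f := fun ζ : EuclideanSpace ℝ (Fin n) => t • ζ) ξ hdf hAd
    simp only [Function.comp_def] at h
    rw [h, hAf]
  have heq : (fun ζ : EuclideanSpace ℝ (Fin n) => G (t⁻¹ * y) (t • ζ))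
      =ᶠ[𝓝 ξ] fun ζ => ((t ^ s : ℝ) : ℂ) * G y ζ := by
    filter_upwards [isOpen_compl_singleton.mem_nhds hξ] with ζ hζ
    exact hG t ht y hy ζ hζ
  have h2 : fderiv ℝ (fun ζ : EuclideanSpace ℝ (Fin n) => G (t⁻¹ * y) (t • ζ)) ξ
      = ((t ^ s : ℝ) : ℂ) • fderiv ℝ (G y) ξ := by
    rw [heq.fderiv_eq, fderiv_const_mul hdg]
  have key := congrArg (fun f : EuclideanSpace ℝ (Fin n) →L[ℝ] ℂ =>
      f (EuclideanSpace.single j (1:ℝ))) (hcomp.symm.trans h2)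
  simp only [ContinuousLinearMap.comp_apply, ContinuousLinearMap.smul_apply,
    ContinuousLinearMap.id_apply, smul_eq_mul] at key
  have hkey2 : (t : ℂ) * fderiv ℝ (G (t⁻¹ * y)) (t • ξ) (EuclideanSpace.single j (1:ℝ))
      = ((t ^ s : ℝ) : ℂ) * fderiv ℝ (G y) ξ (EuclideanSpace.single j (1:ℝ)) := by
    rw [← key, map_smul]
    simp [Complex.real_smul]
  show fderiv ℝ (fun ζ => G (t⁻¹ * y) ζ) (t • ξ) (EuclideanSpace.single j (1:ℝ))
      = ((t ^ (s-1) : ℝ) : ℂ) * fderiv ℝ (fun ζ => G y ζ) ξ (EuclideanSpace.single j (1:ℝ))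
  have ht' : (t : ℂ) ≠ 0 := by exact_mod_cast ht.ne'
  have hts : ((t ^ (s - 1) : ℝ) : ℂ) = ((t ^ s : ℝ) : ℂ) / t := by
    rw [Real.rpow_sub ht, Real.rpow_one]; push_cast; ring
  rw [hts, div_mul_eq_mul_div, ← hkey2]
  field_simp

lemma pderivXi_contDiffOn {n : ℕ} (j : Fin n) (g : EuclideanSpace ℝ (Fin n) → ℂ)
    (hg : ContDiffOn ℝ (⊤ : ℕ∞) g {ζ : EuclideanSpace ℝ (Fin n) | ζ ≠ 0}) :
    ContDiffOn ℝ (⊤ : ℕ∞) (fun ζ => fderiv ℝ g ζ (EuclideanSpace.single j (1:ℝ)))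
      {ζ : EuclideanSpace ℝ (Fin n) | ζ ≠ 0} := by
  have hopen : IsOpen {ζ : EuclideanSpace ℝ (Fin n) | ζ ≠ 0} := isOpen_ne
  have h1 := hg.fderiv_of_isOpen hopen (m := (⊤ : ℕ∞)) (by simp)
  exact h1.clm_apply contDiffOn_const

lemma pderivXiList_props {n : ℕ} (s : ℝ) (F : ℝ → EuclideanSpace ℝ (Fin n) → ℂ)
    (hhom : GenHomogeneousE s F)
    (hsm : ∀ y : ℝ, 0 < y → ContDiffOn ℝ (⊤ : ℕ∞) (F y) {ζ : EuclideanSpace ℝ (Fin n) | ζ ≠ 0})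
    (L : List (Fin n)) :
    (∀ y : ℝ, 0 < y →
        ContDiffOn ℝ (⊤ : ℕ∞) (pderivXiList L F y) {ζ : EuclideanSpace ℝ (Fin n) | ζ ≠ 0}) ∧
      GenHomogeneousE (s - (L.length : ℝ)) (pderivXiList L F) := by
  induction L with
  | nil => exact ⟨hsm, by simpa [pderivXiList] using hhom⟩
  | cons j L ih =>
    obtain ⟨ihs, ihh⟩ := ih
    have hopen : IsOpen {ζ : EuclideanSpace ℝ (Fin n) | ζ ≠ 0} := isOpen_ne
    have hdiff : ∀ y : ℝ, 0 < y → ∀ ξ : EuclideanSpace ℝ (Fin n), ξ ≠ 0 →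
        DifferentiableAt ℝ (pderivXiList L F y) ξ := fun y hy ξ hξ =>
      (((ihs y hy).differentiableOn (by simp)) ξ hξ).differentiableAt (hopen.mem_nhds hξ)
    constructor
    · intro y hy
      exact pderivXi_contDiffOn j _ (ihs y hy)
    · have := pderivXi_genHom _ _ ihh hdiff j
      have h1 : s - (((j :: L).length : ℕ) : ℝ) = s - (L.length : ℝ) - 1 := by
        simp only [List.length_cons]
        push_cast
        ring
      rw [h1]
      exact this

/-- Symbol-type estimate: if `F` is smooth on `(0,∞) × (ℝ^(d-1) \ {0})`, homogeneous of
generalized degree `-m`, and `C` bounds `|y_d^{α_d} ∂_{ξ'}^{α'} F(y_d, ω)|` over `y_d > 0` and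
unit vectors `ω`, then (since `y_d^{α_d}` commutes with `∂_{ξ'}^{α'}`) there is `C' > 0` with
`|∂_{ξ'}^{α'}(y_d^{α_d} F(y_d, ξ'))| ≤ C' (1 + |ξ'|)^{-m-|α'|-α_d}` for `y_d > 0`, `|ξ'| ≥ 1`. -/
theorem symbol_estimate_of_generalized_homogeneous
    (d : ℕ) (hd : 2 ≤ d) (m : ℝ) (F : ℝ → EuclideanSpace ℝ (Fin (d - 1)) → ℂ)
    (hF : ContDiffOn ℝ (⊤ : ℕ∞) (fun p : ℝ × EuclideanSpace ℝ (Fin (d - 1)) => F p.1 p.2)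
      {p : ℝ × EuclideanSpace ℝ (Fin (d - 1)) | 0 < p.1 ∧ p.2 ≠ 0})
    (hhom : GenHomogeneousE (-m) F)
    (L : List (Fin (d - 1))) (αd : ℕ)
    (hdeg : 0 ≤ m + (L.length : ℝ) + (αd : ℝ))
    (C : ℝ)
    (hC : ∀ y : ℝ, 0 < y → ∀ ω : EuclideanSpace ℝ (Fin (d - 1)), ‖ω‖ = 1 →
      ‖((y ^ αd : ℝ) : ℂ) * pderivXiList L F y ω‖ ≤ C) :
    ∃ C' : ℝ, 0 < C' ∧ ∀ y : ℝ, 0 < y → ∀ ξ : EuclideanSpace ℝ (Fin (d - 1)), 1 ≤ ‖ξ‖ →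
      ‖((y ^ αd : ℝ) : ℂ) * pderivXiList L F y ξ‖ ≤
        C' * (1 + ‖ξ‖) ^ (-m - (L.length : ℝ) - (αd : ℝ)) := by
  -- notation
  set s : ℝ := -m - (L.length : ℝ) with hs
  set e : ℝ := s - (αd : ℝ) with he
  have hee : e = -m - (L.length : ℝ) - (αd : ℝ) := by rw [he, hs]
  have he0 : e ≤ 0 := by rw [hee]; linarith
  -- slice smoothness
  have hsm : ∀ y : ℝ, 0 < y →
      ContDiffOn ℝ (⊤ : ℕ∞) (F y) {ζ : EuclideanSpace ℝ (Fin (d-1)) | ζ ≠ 0} := by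
    intro y hy
    have hmap : Set.MapsTo (fun ζ : EuclideanSpace ℝ (Fin (d-1)) => ((y, ζ) :
        ℝ × EuclideanSpace ℝ (Fin (d-1)))) {ζ | ζ ≠ 0}
        {p : ℝ × EuclideanSpace ℝ (Fin (d-1)) | 0 < p.1 ∧ p.2 ≠ 0} :=
      fun ζ hζ => ⟨hy, hζ⟩
    exact hF.comp ((contDiff_const.prodMk contDiff_id).contDiffOn) hmap
  obtain ⟨hGs, hGh⟩ := pderivXiList_props (-m) F hhom hsm L
  have hGh' : GenHomogeneousE s (pderivXiList L F) := by
    have : -m - (L.length : ℝ) = s := rfl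
    simpa [this] using hGh
  -- C is nonnegative
  have hC0 : 0 ≤ C := by
    have hne : (0 : ℕ) < d - 1 := by omega
    have := hC 1 one_pos (EuclideanSpace.single (⟨0, hne⟩ : Fin (d-1)) (1:ℝ))
      (by rw [EuclideanSpace.norm_single]; simp)
    exact le_trans (norm_nonneg _) this
  refine ⟨(C + 1) * 2 ^ (-e), mul_pos (by linarith) (Real.rpow_pos_of_pos two_pos _), ?_⟩
  intro y hy ξ hξ
  set t : ℝ := ‖ξ‖ with htdef
  have ht : 0 < t := lt_of_lt_of_le one_pos hξ
  set ω : EuclideanSpace ℝ (Fin (d-1)) := t⁻¹ • ξ with hωdef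
  have hξne : ξ ≠ 0 := norm_pos_iff.mp ht
  have hω : ‖ω‖ = 1 := by
    rw [hωdef, norm_smul, norm_inv, norm_norm, ← htdef, inv_mul_cancel₀ ht.ne']
  have hωne : ω ≠ 0 := fun h => by simp [h] at hω
  have h1 : pderivXiList L F y ξ = ((t ^ s : ℝ) : ℂ) * pderivXiList L F (t * y) ω := by
    have := hGh' t ht (t * y) (by positivity) ω hωne
    rwa [inv_mul_cancel_left₀ ht.ne', smul_inv_smul₀ ht.ne'] at this
  set X : ℝ := ‖pderivXiList L F (t * y) ω‖ with hX
  have hX0 : 0 ≤ X := norm_nonneg _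
  have hCb : (t * y) ^ αd * X ≤ C := by
    have := hC (t * y) (by positivity) ω hω
    have habs : ‖(((t*y) ^ αd : ℝ) : ℂ) * pderivXiList L F (t * y) ω‖
        = (t * y) ^ αd * X := by
      rw [norm_mul, Complex.norm_real, Real.norm_eq_abs, abs_of_pos (by positivity)]
    rwa [habs] at this
  have hLHS : ‖((y ^ αd : ℝ) : ℂ) * pderivXiList L F y ξ‖
      = y ^ αd * (t ^ s * X) := by
    rw [h1, norm_mul, norm_mul, Complex.norm_real, Complex.norm_real, Real.norm_eq_abs, Real.norm_eq_abs,
      abs_of_pos (by positivity : (0:ℝ) < y ^ αd),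
      abs_of_pos (Real.rpow_pos_of_pos ht s), hX]
  have hfac : y ^ αd * (t ^ s * X) = t ^ e * ((t * y) ^ αd * X) := by
    have h2 : t ^ e * t ^ (αd : ℝ) = t ^ s := by
      rw [← Real.rpow_add ht, he]; ring_nf
    have h3 : t ^ ((αd : ℝ)) = t ^ αd := Real.rpow_natCast t αd
    rw [mul_pow, ← h3, ← h2]
    ring
  have hte : 0 ≤ t ^ e := (Real.rpow_pos_of_pos ht e).le
  have step1 : ‖((y ^ αd : ℝ) : ℂ) * pderivXiList L F y ξ‖ ≤ t ^ e * C := by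
    rw [hLHS, hfac]
    exact mul_le_mul_of_nonneg_left hCb hte
  -- compare t^e with (1+t)^e
  have h2t : 1 + t ≤ 2 * t := by linarith
  have hcmp : (2 * t) ^ e ≤ (1 + t) ^ e :=
    Real.rpow_le_rpow_of_nonpos (by linarith) h2t he0
  have h2te : (2 * t) ^ e = 2 ^ e * t ^ e :=
    Real.mul_rpow (by norm_num) ht.le
  have hte2 : t ^ e ≤ 2 ^ (-e) * (1 + t) ^ e := by
    have h4 : 2 ^ (-e) * (2 ^ e * t ^ e) = t ^ e := by
      rw [← mul_assoc, ← Real.rpow_add two_pos]; simp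
    calc t ^ e = 2 ^ (-e) * (2 * t) ^ e := by rw [h2te, h4]
      _ ≤ 2 ^ (-e) * (1 + t) ^ e :=
        mul_le_mul_of_nonneg_left hcmp (Real.rpow_pos_of_pos two_pos _).le
  have hfin : t ^ e * C ≤ (C + 1) * 2 ^ (-e) * (1 + t) ^ e := by
    calc t ^ e * C ≤ (2 ^ (-e) * (1 + t) ^ e) * C :=
          mul_le_mul_of_nonneg_right hte2 hC0
      _ ≤ (C + 1) * 2 ^ (-e) * (1 + t) ^ e := by
          have : 0 ≤ (1 + t) ^ e := (Real.rpow_pos_of_pos (by linarith) e).le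
          have h5 : 0 ≤ (2:ℝ) ^ (-e) := (Real.rpow_pos_of_pos two_pos _).le
          nlinarith
  exact le_trans step1 hfin
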